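/- arXiv:2305.13882 — 3 statements merged into one kernel-verified Lean document; each statement's English description precedes it below -/
import Mathlib

section
/- If each gradient ∇Φᵢ is Lipschitз with constant L and satisfies the contractivity-at-infinity condition ⟨∇Φᵢ(x)−∇Φᵢ(y), x−y⟩ ≥ K‖x−y‖² for all ‖x−y‖ ≥ R, then each Φᵢ is (K/2, b)-dissipative, i.e. ⟨x, ∇Φᵢ(x)⟩ ≥ (K/2)‖x‖² − b for all x ∈ ℝᵈ, where b = max{ (K/2)R² + R·sup_{i} sup_{‖x‖≤R} ‖∇Φᵢ(x)‖, (1/(2K)) sup_i ‖∇Φᵢ(0)‖² }. -/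
open MeasureTheory Real
open scoped RealInnerProductSpace

noncomputable section

abbrev Euc (d : ℕ) := EuclideanSpace ℝ (Fin d)

/-! Far from the origin, contractivity against `y = 0` gives
`⟪x, ∇Φ x⟫ ≥ K‖x‖² - ‖∇Φ 0‖‖x‖`, and Young's inequality absorbs the linear term into
`(K/2)‖x‖²` at the cost of `‖∇Φ 0‖² / (2K)`. Inside the ball of radius `R`, Cauchy–Schwarz
bounds `⟪x, ∇Φ x⟫` below by `-R sup_{‖y‖≤R} ‖∇Φ y‖`, which is finite since a Lipschitz
gradient is continuous on a compact ball. -/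

section Supremum

variable {X E : Type*} [PseudoMetricSpace X] [ProperSpace X] [SeminormedAddCommGroup E]

theorem norm_le_iSup_closedBall {f : X → E} (hf : Continuous f) {c x : X} {r : ℝ}
    (hx : x ∈ Metric.closedBall c r) :
    ‖f x‖ ≤ ⨆ y : Metric.closedBall c r, ‖f y.1‖ := by
  have hbdd : BddAbove (Set.range fun y : Metric.closedBall c r => ‖f y.1‖) := by
    simpa only [Set.image_eq_range] using
      (isCompact_closedBall c r).bddAbove_image hf.norm.continuousOn
  exact le_ciSup hbdd ⟨x, hx⟩

theorem norm_le_iSup_iSup_closedBall {ι : Type*} [Finite ι] {f : ι → X → E}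
    (hf : ∀ i, Continuous (f i)) (i : ι) {c x : X} {r : ℝ} (hx : x ∈ Metric.closedBall c r) :
    ‖f i x‖ ≤ ⨆ j, ⨆ y : Metric.closedBall c r, ‖f j y.1‖ :=
  (norm_le_iSup_closedBall (hf i) hx).trans <|
    le_ciSup (f := fun j => ⨆ y : Metric.closedBall c r, ‖f j y.1‖) (Finite.bddAbove_range _) i

end Supremum

theorem mul_le_sq_div_add_sq {a b K : ℝ} (hK : 0 < K) :
    a * b ≤ a ^ 2 / (2 * K) + K / 2 * b ^ 2 := by
  have key : 0 ≤ (a - K * b) ^ 2 / (2 * K) := by positivity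
  have expand : (a - K * b) ^ 2 / (2 * K) = a ^ 2 / (2 * K) + K / 2 * b ^ 2 - a * b := by
    field_simp
    ring
  linarith

section Dissipativity

variable {E : Type*} [NormedAddCommGroup E] [InnerProductSpace ℝ E]

theorem inner_apply_ge_of_inner_sub_apply_zero_ge {g : E → E} {K : ℝ} (hK : 0 < K) {x : E}
    (hx : K * ‖x‖ ^ 2 ≤ ⟪g x - g 0, x⟫) :
    K / 2 * ‖x‖ ^ 2 - ‖g 0‖ ^ 2 / (2 * K) ≤ ⟪x, g x⟫ := by
  rw [inner_sub_left, real_inner_comm] at hx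
  have hcs : -(‖g 0‖ * ‖x‖) ≤ ⟪g 0, x⟫ := neg_le_of_abs_le (abs_real_inner_le_norm _ _)
  have hyoung := mul_le_sq_div_add_sq (a := ‖g 0‖) (b := ‖x‖) hK
  linarith

theorem inner_apply_ge_of_norm_le {g : E → E} {K R S : ℝ} (hK : 0 ≤ K) {x : E}
    (hxR : ‖x‖ ≤ R) (hgS : ‖g x‖ ≤ S) :
    K / 2 * ‖x‖ ^ 2 - (K / 2 * R ^ 2 + R * S) ≤ ⟪x, g x⟫ := by
  have hcs : -(‖x‖ * ‖g x‖) ≤ ⟪x, g x⟫ := neg_le_of_abs_le (abs_real_inner_le_norm x (g x))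
  have hprod : ‖x‖ * ‖g x‖ ≤ R * S :=
    mul_le_mul hxR hgS (norm_nonneg _) ((norm_nonneg x).trans hxR)
  have hsq : K / 2 * ‖x‖ ^ 2 ≤ K / 2 * R ^ 2 := by
    gcongr
  linarith

end Dissipativity

theorem dissipative_of_contractive_at_infinity_general
    {d : ℕ} {ι : Type*} [Fintype ι]
    (Φ : ι → Euc d → ℝ) (L K R : ℝ) (hK : 0 < K)
    (hLip : ∀ i, LipschitzWith L.toNNReal (gradient (Φ i)))
    (hconv : ∀ i, ∀ x y : Euc d, R ≤ ‖x - y‖ →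
      K * ‖x - y‖ ^ 2 ≤ ⟪gradient (Φ i) x - gradient (Φ i) y, x - y⟫) :
    ∀ i, ∀ x : Euc d,
      (K / 2) * ‖x‖ ^ 2 -
        max ((K / 2) * R ^ 2 +
              R * (⨆ i, ⨆ x : Metric.closedBall (0 : Euc d) R, ‖gradient (Φ i) x.1‖))
            ((1 / (2 * K)) * ⨆ i, ‖gradient (Φ i) 0‖ ^ 2)
      ≤ ⟪x, gradient (Φ i) x⟫ := by
  intro i x
  rcases le_or_gt R ‖x‖ with hfar | hnear
  · have hcontr := hconv i x 0 (by simpa using hfar)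
    simp only [sub_zero] at hcontr
    have hsup : ‖gradient (Φ i) 0‖ ^ 2 ≤ ⨆ j, ‖gradient (Φ j) 0‖ ^ 2 :=
      le_ciSup (f := fun j => ‖gradient (Φ j) 0‖ ^ 2) (Finite.bddAbove_range _) i
    have hb : ‖gradient (Φ i) 0‖ ^ 2 / (2 * K) ≤ 1 / (2 * K) * ⨆ j, ‖gradient (Φ j) 0‖ ^ 2 := by
      rw [one_div_mul_eq_div]
      gcongr
    exact (sub_le_sub_left (hb.trans (le_max_right _ _)) _).trans
      (inner_apply_ge_of_inner_sub_apply_zero_ge hK hcontr)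
  · have hS := norm_le_iSup_iSup_closedBall (fun j => (hLip j).continuous) i
      (mem_closedBall_zero_iff.mpr hnear.le)
    exact (sub_le_sub_left (le_max_left _ _) _).trans
      (inner_apply_ge_of_norm_le hK.le hnear.le hS)

/-- Lipschitz gradients plus contractivity at infinity imply
`(K/2, b)`-dissipativity with the explicit constant `b`. -/
theorem dissipative_of_contractive_at_infinity
    {d : ℕ} {ι : Type*} [Fintype ι] [Nonempty ι]
    (Φ : ι → Euc d → ℝ) (L K R : ℝ) (hL : 0 ≤ L) (hK : 0 < K) (hR : 0 < R)
    (hdiff : ∀ i, ∀ x : Euc d, DifferentiableAt ℝ (Φ i) x)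
    (hLip : ∀ i, LipschitzWith L.toNNReal (gradient (Φ i)))
    (hconv : ∀ i, ∀ x y : Euc d, R ≤ ‖x - y‖ →
      K * ‖x - y‖ ^ 2 ≤ ⟪gradient (Φ i) x - gradient (Φ i) y, x - y⟫) :
    ∀ i, ∀ x : Euc d,
      (K / 2) * ‖x‖ ^ 2 -
        max ((K / 2) * R ^ 2 +
              R * (⨆ i, ⨆ x : Metric.closedBall (0 : Euc d) R, ‖gradient (Φ i) x.1‖))
            ((1 / (2 * K)) * ⨆ i, ‖gradient (Φ i) 0‖ ^ 2)
      ≤ ⟪x, gradient (Φ i) x⟫ :=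
  dissipative_of_contractive_at_infinity_general Φ L K R hK hLip hconv
end
end

section
/- There exists a continuously differentiable function Φ : ℝ → ℝ such that x·Φ'(x) ≥ x²/2 for all x (so Φ is (1/2,0)-dissipative), but Φ does not satisfy the contractivity-at-infinity condition: for every K, R > 0 there exist x, y with ‖x−y‖ ≥ R and (Φ'(x)−Φ'(y))(x−y) < K(x−y)². Concretely, one may take Φ' odd with Φ'(x)=x for 0≤x≤2, and for 2ⁿ ≤ x < 2ⁿ⁺¹ (n≥1): Φ'(x)=2ⁿ on [2ⁿ, 2ⁿ+log n] and linear from 2ⁿ to 2ⁿ⁺¹ on the remainder; then Φ' is constant on intervals [2ⁿ, 2ⁿ+log n] of unbounded length, violating the condition. -/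
/-! The derivative `t (3 + sin √|t|) / 4` lies between `t / 2` and `t`, which gives
dissipativity. It equals `t` at `t = a²` with `a ≡ π/2 (mod 2π)` and `t / 2` at `(a + π)²`;
since `(a + π)² < 2a²` for large `a`, the derivative decreases between these two points,
whose distance `π (2a + π)` is unbounded. -/

open Real

section Primitive

variable {E : Type*} [NormedAddCommGroup E] [NormedSpace ℝ E] [CompleteSpace E]
  {g : ℝ → E}

theorem Continuous.deriv_primitive (hg : Continuous g) :
    deriv (fun u => ∫ t in (0 : ℝ)..u, g t) = g :=
  funext (hg.deriv_integral g 0)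

theorem Continuous.contDiff_one_primitive (hg : Continuous g) :
    ContDiff ℝ 1 (fun u => ∫ t in (0 : ℝ)..u, g t) :=
  contDiff_one_iff_deriv.2
    ⟨fun x => (hg.integral_hasStrictDerivAt 0 x).hasDerivAt.differentiableAt, hg.deriv_primitive.symm ▸ hg⟩

end Primitive

noncomputable def oscillatingDrift (t : ℝ) : ℝ :=
  t * (3 + sin √|t|) / 4

theorem continuous_oscillatingDrift : Continuous oscillatingDrift := by
  unfold oscillatingDrift
  fun_prop

theorem sq_div_two_le_mul_oscillatingDrift (x : ℝ) : x ^ 2 / 2 ≤ x * oscillatingDrift x := by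
  have := neg_one_le_sin √|x|
  unfold oscillatingDrift
  nlinarith [sq_nonneg x]

theorem oscillatingDrift_sq {a : ℝ} (ha : 0 ≤ a) :
    oscillatingDrift (a ^ 2) = a ^ 2 * (3 + sin a) / 4 := by
  rw [oscillatingDrift, abs_of_nonneg (sq_nonneg a), sqrt_sq ha]

theorem oscillatingDrift_peak (n : ℕ) :
    oscillatingDrift ((π / 2 + n * (2 * π)) ^ 2) = (π / 2 + n * (2 * π)) ^ 2 := by
  rw [oscillatingDrift_sq (by positivity), sin_add_nat_mul_two_pi, sin_pi_div_two]
  ring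

theorem oscillatingDrift_trough (n : ℕ) :
    oscillatingDrift ((π / 2 + n * (2 * π) + π) ^ 2) = (π / 2 + n * (2 * π) + π) ^ 2 / 2 := by
  rw [oscillatingDrift_sq (by positivity), sin_add_pi, sin_add_nat_mul_two_pi, sin_pi_div_two]
  ring

theorem exists_far_apart_oscillatingDrift_decreasing (R : ℝ) :
    ∃ x y : ℝ, R ≤ x - y ∧ (oscillatingDrift x - oscillatingDrift y) * (x - y) < 0 := by
  set n : ℕ := ⌈R⌉₊ + 2
  have hRn : R + 2 ≤ n := by
    simp only [n, Nat.cast_add, Nat.cast_ofNat]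
    linarith [Nat.le_ceil R]
  have hn : (2 : ℝ) ≤ n := by exact_mod_cast Nat.le_add_left 2 _
  have hpeak := oscillatingDrift_peak n
  have htrough := oscillatingDrift_trough n
  set a : ℝ := π / 2 + n * (2 * π)
  have hπ : 3 < π := pi_gt_three
  have ha : n + 3 * π ≤ a := by simp only [a]; nlinarith
  have hgap : (a + π) ^ 2 - a ^ 2 = π * (2 * a + π) := by ring
  -- `a ≥ 3π` makes `(a + π)² ≤ (4a/3)² < 2a²`
  have hratio : (a + π) ^ 2 < 2 * a ^ 2 := by nlinarith
  refine ⟨(a + π) ^ 2, a ^ 2, by nlinarith, ?_⟩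
  rw [hpeak, htrough]
  exact mul_neg_of_neg_of_pos (by linarith) (by nlinarith)

/-- dissipativeness is strictly weaker than contractivity at infinity:
there is a `C¹` function `Φ : ℝ → ℝ` with `x·Φ'(x) ≥ x²/2` for all `x`
(i.e. `(1/2, 0)`-dissipative), which for every `K, R > 0` violates the
contractivity-at-infinity condition. -/
theorem dissipative_not_contractive_at_infinity :
    ∃ Φ : ℝ → ℝ, ContDiff ℝ 1 Φ ∧
      (∀ x : ℝ, x ^ 2 / 2 ≤ x * deriv Φ x) ∧
      (∀ K R : ℝ, 0 < K → 0 < R → ∃ x y : ℝ, R ≤ |x - y| ∧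
        (deriv Φ x - deriv Φ y) * (x - y) < K * (x - y) ^ 2) := by
  refine ⟨fun u => ∫ t in (0 : ℝ)..u, oscillatingDrift t,
    continuous_oscillatingDrift.contDiff_one_primitive, ?_, ?_⟩ <;>
    rw [continuous_oscillatingDrift.deriv_primitive]
  · exact sq_div_two_le_mul_oscillatingDrift
  · intro K R hK _
    obtain ⟨x, y, hxy, hdecr⟩ := exists_far_apart_oscillatingDrift_decreasing R
    exact ⟨x, y, hxy.trans (le_abs_self _), hdecr.trans_le (by positivity)⟩
end

section
/- Pointwise drift inequality: if ∇Φᵢ is L-Lipschitz and ⟨∇Φᵢ(x)−∇Φᵢ(y),x−y⟩ ≥ K‖x−y‖² for ‖x−y‖ ≥ R, then for all θ ∈ ℝᵈ: −2⟨θ, ∇Φᵢ(θ)⟩ ≤ C_Φ − K‖θ‖², where C_Φ = 2(L+K)R² + ‖∇Φᵢ(0)‖²/K. -/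
open MeasureTheory Real
open scoped RealInnerProductSpace

noncomputable section

/-! An `L`-Lipschitz gradient can push `⟨θ, ∇Φ(θ) - ∇Φ(0)⟩` below zero by at most `L‖θ‖²`, which on
the ball `‖θ‖ < R` costs at most `(L + K)R²` against the contractivity bound `K‖θ‖²` valid outside
it. Hence `⟨θ, ∇Φ(θ) - ∇Φ(0)⟩ ≥ K‖θ‖² - (L + K)R²` everywhere, and Young's inequality
`-2⟨θ, ∇Φ(0)⟩ ≤ K‖θ‖² + ‖∇Φ(0)‖²/K` absorbs the remaining term. -/

section InnerProductSpace

variable {E : Type*} [NormedAddCommGroup E] [InnerProductSpace ℝ E]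

theorem LipschitzWith.neg_mul_norm_sq_le_inner_sub {g : E → E} {L : NNReal}
    (hg : LipschitzWith L g) (x y : E) : -(L * ‖x - y‖ ^ 2) ≤ ⟪g x - g y, x - y⟫ := by
  have hcs : -(‖g x - g y‖ * ‖x - y‖) ≤ ⟪g x - g y, x - y⟫ :=
    neg_le_of_abs_le (abs_real_inner_le_norm _ _)
  have hlip : ‖g x - g y‖ ≤ L * ‖x - y‖ := by
    simpa only [dist_eq_norm] using hg.dist_le_mul x y
  nlinarith [norm_nonneg (x - y)]

theorem LipschitzWith.mul_norm_sq_sub_le_inner_sub_of_contractive_outside_ball {g : E → E}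
    {L : NNReal} {K R : ℝ} (hg : LipschitzWith L g) (hLK : 0 ≤ L + K)
    (hconv : ∀ x y : E, R ≤ ‖x - y‖ → K * ‖x - y‖ ^ 2 ≤ ⟪g x - g y, x - y⟫) (x y : E) :
    K * ‖x - y‖ ^ 2 - (L + K) * R ^ 2 ≤ ⟪g x - g y, x - y⟫ := by
  rcases le_or_gt R ‖x - y‖ with hfar | hnear
  · nlinarith [hconv x y hfar]
  · have hsq : ‖x - y‖ ^ 2 ≤ R ^ 2 := pow_le_pow_left₀ (norm_nonneg _) hnear.le 2
    nlinarith [hg.neg_mul_norm_sq_le_inner_sub x y]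

theorem neg_two_mul_real_inner_le_mul_norm_sq_add_div {K : ℝ} (hK : 0 < K) (x v : E) :
    -(2 * ⟪x, v⟫) ≤ K * ‖x‖ ^ 2 + ‖v‖ ^ 2 / K := by
  have hcs : -⟪x, v⟫ ≤ ‖x‖ * ‖v‖ := (neg_le_abs _).trans (abs_real_inner_le_norm x v)
  have hyoung := two_mul_le_add_mul_sq (a := ‖x‖) (b := ‖v‖) hK
  rw [div_eq_inv_mul]
  linarith

end InnerProductSpace

theorem pointwise_drift_inequality_general {d : ℕ} (Φ : Euc d → ℝ) (L K R : ℝ)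
    (hL : 0 ≤ L) (hK : 0 < K)
    (hLip : LipschitzWith L.toNNReal (gradient Φ))
    (hconv : ∀ x y : Euc d, R ≤ ‖x - y‖ →
      K * ‖x - y‖ ^ 2 ≤ ⟪gradient Φ x - gradient Φ y, x - y⟫) :
    ∀ θ : Euc d, -2 * ⟪θ, gradient Φ θ⟫ ≤
      (2 * (L + K) * R ^ 2 + ‖gradient Φ 0‖ ^ 2 / K) - K * ‖θ‖ ^ 2 := by
  intro θ
  have hLK : 0 ≤ (L.toNNReal : ℝ) + K := by positivity
  have hdiss := hLip.mul_norm_sq_sub_le_inner_sub_of_contractive_outside_ball hLK hconv θ 0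
  rw [Real.coe_toNNReal L hL, sub_zero, real_inner_comm, inner_sub_right] at hdiss
  have hyoung := neg_two_mul_real_inner_le_mul_norm_sq_add_div hK θ (gradient Φ 0)
  linarith

/-- pointwise drift inequality. If `∇Φ` is `L`-Lipschitz and satisfies the
contractivity-at-infinity condition with constants `(K, R)`, then for all `θ`:
`−2⟨θ, ∇Φ(θ)⟩ ≤ C_Φ − K‖θ‖²` with `C_Φ = 2(L+K)R² + ‖∇Φ(0)‖²/K`. -/
theorem pointwise_drift_inequality {d : ℕ} (Φ : Euc d → ℝ) (L K R : ℝ)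
    (hL : 0 ≤ L) (hK : 0 < K) (hR : 0 < R)
    (hdiff : ∀ x : Euc d, DifferentiableAt ℝ Φ x)
    (hLip : LipschitzWith L.toNNReal (gradient Φ))
    (hconv : ∀ x y : Euc d, R ≤ ‖x - y‖ →
      K * ‖x - y‖ ^ 2 ≤ ⟪gradient Φ x - gradient Φ y, x - y⟫) :
    ∀ θ : Euc d, -2 * ⟪θ, gradient Φ θ⟫ ≤
      (2 * (L + K) * R ^ 2 + ‖gradient Φ 0‖ ^ 2 / K) - K * ‖θ‖ ^ 2 :=
  pointwise_drift_inequality_general Φ L K R hL hK hLip hconv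
end
end
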